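/- Let ν : Γ → ℝ³ be a 1-Lipschitz unit vector field on Γ ⊂ ℝ³ and let κ_{i,j} be as defined by κ_{i,j}(x,y) := [ (x_i − y_i) − (ν(x)·(x−y)) ν_i(x) ] [ ν_j(x) − ν_j(y) ] / |x − y|³. Then for all x, y, z ∈ Γ with x ≠ y, z ≠ y, and 2|x − z| ≤ |x − y|, one has |κ_{i,j}(x,y) − κ_{i,j}(z,y)| ≤ 2|x−z|/|x−y|² + 3|x−z|/|x−y| + 3|x−z|/|x−y|² + 216|x−z|/|x−y|². -/

import Mathlib

/-- The kernel `κ_{i,j}(x,y)` arising in the surface gradient of the commutator `C_ν`. -/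
noncomputable def kappa (ν : EuclideanSpace ℝ (Fin 3) → EuclideanSpace ℝ (Fin 3))
    (i j : Fin 3) (x y : EuclideanSpace ℝ (Fin 3)) : ℝ :=
  ((x i - y i) - (inner ℝ (ν x) (x - y) : ℝ) * ν x i) * (ν x j - ν y j) / ‖x - y‖ ^ 3

/-!
Write `κ_{i,j}(x,y) = A(x) B(x) / |x-y|³` with `A(x)` the `i`-th coordinate of the part of
`x - y` tangential to `ν(x)` and `B(x) = ν_j(x) - ν_j(y)`. The difference `κ(x,y) - κ(z,y)` then
splits into three terms, controlled by `A(x) - A(z)`, by `B(x) - B(z)` and by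
`|x-y|⁻³ - |z-y|⁻³`; each is `O(|x-z|)` because `ν` is `1`-Lipschitz, and `|z-y|` is comparable
to `|x-y|` when `2|x-z| ≤ |x-y|`.
-/

open RealInnerProductSpace

section Scalar

lemma abs_mul_div_sub_mul_div_le (A A' B B' s t : ℝ) :
    |A * B / s - A' * B' / t| ≤
      |A - A'| * |B| / |s| + |A'| * |B - B'| / |s| + |A'| * |B'| * |1 / s - 1 / t| := by
  have hsplit : A * B / s - A' * B' / t =
      (A - A') * B / s + A' * (B - B') / s + A' * B' * (1 / s - 1 / t) := by ring
  rw [hsplit]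
  refine (abs_add_three _ _ _).trans_eq ?_
  simp only [abs_mul, abs_div]

lemma abs_one_div_pow_three_sub_le {a b c : ℝ} (ha : 0 < a) (hba : |b - a| ≤ c)
    (hca : 2 * c ≤ a) : |1 / a ^ 3 - 1 / b ^ 3| ≤ 48 * c / a ^ 4 := by
  have hb_upper : b ≤ 3 / 2 * a := by linarith [le_of_abs_le hba]
  have hb_lower : a ≤ 2 * b := by linarith [neg_abs_le (b - a)]
  have hb : 0 < b := by linarith
  have hc : 0 ≤ c := (abs_nonneg _).trans hba
  have hcube : a ^ 3 ≤ 8 * b ^ 3 := by nlinarith [pow_le_pow_left₀ ha.le hb_lower 3]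
  have hnum : |b ^ 3 - a ^ 3| ≤ c * (19 / 4 * a ^ 2) := by
    rw [show b ^ 3 - a ^ 3 = (b - a) * (b ^ 2 + a * b + a ^ 2) by ring, abs_mul,
      abs_of_nonneg (by positivity : 0 ≤ b ^ 2 + a * b + a ^ 2)]
    gcongr
    nlinarith
  rw [show 1 / a ^ 3 - 1 / b ^ 3 = (b ^ 3 - a ^ 3) / (a ^ 3 * b ^ 3) by field_simp,
    abs_div, abs_of_pos (by positivity : 0 < a ^ 3 * b ^ 3),
    div_le_div_iff₀ (by positivity) (by positivity)]
  nlinarith [mul_le_mul_of_nonneg_right hnum (pow_nonneg ha.le 4),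
    mul_le_mul_of_nonneg_left hcube (mul_nonneg hc (pow_nonneg ha.le 3)),
    mul_nonneg hc (pow_nonneg ha.le 6)]

end Scalar

section NormedGroup

variable {E : Type*}

lemma norm_sub_le_three_halves_mul [SeminormedAddCommGroup E] {x y z : E}
    (h : 2 * ‖x - z‖ ≤ ‖x - y‖) : ‖z - y‖ ≤ 3 / 2 * ‖x - y‖ := by
  have := norm_sub_le_norm_sub_add_norm_sub z x y
  rw [norm_sub_rev z x] at this
  linarith

lemma abs_one_div_norm_pow_three_sub_le [NormedAddCommGroup E] {x y z : E} (hxy : x ≠ y)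
    (h : 2 * ‖x - z‖ ≤ ‖x - y‖) :
    |1 / ‖x - y‖ ^ 3 - 1 / ‖z - y‖ ^ 3| ≤ 48 * ‖x - z‖ / ‖x - y‖ ^ 4 := by
  refine abs_one_div_pow_three_sub_le (norm_pos_iff.2 (sub_ne_zero.2 hxy)) ?_ h
  have := abs_norm_sub_norm_le (z - y) (x - y)
  rwa [sub_sub_sub_cancel_right, norm_sub_rev z x] at this

end NormedGroup

section Tangential

variable {E : Type*} [NormedAddCommGroup E] [InnerProductSpace ℝ E]

def tangentialPart (n w : E) : E := w - ⟪n, w⟫ • n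

lemma tangentialPart_add (n u w : E) :
    tangentialPart n (u + w) = tangentialPart n u + tangentialPart n w := by
  simp only [tangentialPart, inner_add_right, add_smul]
  abel

lemma norm_tangentialPart_le {n : E} (hn : ‖n‖ ≤ 1) (w : E) :
    ‖tangentialPart n w‖ ≤ 2 * ‖w‖ := by
  calc ‖tangentialPart n w‖ ≤ ‖w‖ + |⟪n, w⟫| * ‖n‖ := by
        simpa [tangentialPart, norm_smul] using norm_sub_le w (⟪n, w⟫ • n)
    _ ≤ ‖w‖ + ‖n‖ * ‖w‖ * 1 := by gcongr; exact abs_real_inner_le_norm n w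
    _ ≤ 2 * ‖w‖ := by nlinarith [norm_nonneg w]

lemma norm_tangentialPart_sub_le {n m : E} (hn : ‖n‖ ≤ 1) (hm : ‖m‖ ≤ 1) (w : E) :
    ‖tangentialPart n w - tangentialPart m w‖ ≤ 2 * ‖n - m‖ * ‖w‖ := by
  have hsplit : tangentialPart n w - tangentialPart m w = ⟪m - n, w⟫ • m + ⟪n, w⟫ • (m - n) := by
    simp only [tangentialPart, inner_sub_left, sub_smul, smul_sub]
    abel
  rw [hsplit, norm_sub_rev n m]
  calc ‖⟪m - n, w⟫ • m + ⟪n, w⟫ • (m - n)‖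
      ≤ ‖m - n‖ * ‖w‖ * ‖m‖ + ‖n‖ * ‖w‖ * ‖m - n‖ := by
        refine (norm_add_le _ _).trans ?_
        simp only [norm_smul, Real.norm_eq_abs]
        gcongr <;> exact abs_real_inner_le_norm _ _
    _ ≤ ‖m - n‖ * ‖w‖ * 1 + 1 * ‖w‖ * ‖m - n‖ := by gcongr
    _ = 2 * ‖m - n‖ * ‖w‖ := by ring

end Tangential

lemma kappa_eq (ν : EuclideanSpace ℝ (Fin 3) → EuclideanSpace ℝ (Fin 3)) (i j : Fin 3)
    (x y : EuclideanSpace ℝ (Fin 3)) :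
    kappa ν i j x y = tangentialPart (ν x) (x - y) i * (ν x - ν y) j / ‖x - y‖ ^ 3 := by
  simp [kappa, tangentialPart]

lemma abs_apply_le_norm {ι : Type*} [Fintype ι] (v : EuclideanSpace ℝ ι) (i : ι) :
    |v i| ≤ ‖v‖ :=
  PiLp.norm_apply_le v i

theorem stmt5_general (Γ : Set (EuclideanSpace ℝ (Fin 3)))
    (ν : EuclideanSpace ℝ (Fin 3) → EuclideanSpace ℝ (Fin 3))
    (hunit : ∀ x ∈ Γ, ‖ν x‖ = 1)
    (hlip : ∀ x ∈ Γ, ∀ z ∈ Γ, ‖ν x - ν z‖ ≤ ‖x - z‖)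
    (i j : Fin 3)
    (x y z : EuclideanSpace ℝ (Fin 3)) (hx : x ∈ Γ) (hy : y ∈ Γ) (hz : z ∈ Γ)
    (hxy : x ≠ y) (h : 2 * ‖x - z‖ ≤ ‖x - y‖) :
    |kappa ν i j x y - kappa ν i j z y| ≤
      2 * ‖x - z‖ / ‖x - y‖ ^ 2 + 3 * ‖x - z‖ / ‖x - y‖ +
      3 * ‖x - z‖ / ‖x - y‖ ^ 2 + 216 * ‖x - z‖ / ‖x - y‖ ^ 2 := by
  have ha : 0 < ‖x - y‖ := norm_pos_iff.2 (sub_ne_zero.2 hxy)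
  have hb := norm_sub_le_three_halves_mul h
  have hνx := (hunit x hx).le
  have hνz := (hunit z hz).le
  have hA : ‖tangentialPart (ν x) (x - y) - tangentialPart (ν z) (z - y)‖ ≤
      2 * ‖x - z‖ + 2 * ‖x - z‖ * ‖z - y‖ := by
    rw [← sub_add_sub_cancel x z y, tangentialPart_add, add_sub_assoc]
    refine (norm_add_le _ _).trans (add_le_add (norm_tangentialPart_le hνx _) ?_)
    refine (norm_tangentialPart_sub_le hνx hνz _).trans ?_
    gcongr
    exact hlip x hx z hz
  have hA' := (abs_apply_le_norm _ i).trans (norm_tangentialPart_le hνz (z - y))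
  have hB := (abs_apply_le_norm _ j).trans (hlip x hx y hy)
  have hB' := (abs_apply_le_norm _ j).trans (hlip z hz y hy)
  have hBB : |(ν x - ν y) j - (ν z - ν y) j| ≤ ‖x - z‖ := by
    rw [← PiLp.sub_apply, sub_sub_sub_cancel_right]
    exact (abs_apply_le_norm _ j).trans (hlip x hx z hz)
  rw [kappa_eq, kappa_eq]
  refine (abs_mul_div_sub_mul_div_le _ _ _ _ _ _).trans ?_
  rw [abs_of_pos (by positivity : 0 < ‖x - y‖ ^ 3)]
  calc _ ≤ (2 * ‖x - z‖ + 2 * ‖x - z‖ * ‖z - y‖) * ‖x - y‖ / ‖x - y‖ ^ 3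
          + 2 * ‖z - y‖ * ‖x - z‖ / ‖x - y‖ ^ 3
          + 2 * ‖z - y‖ * ‖z - y‖ * (48 * ‖x - z‖ / ‖x - y‖ ^ 4) := by
        gcongr
        · exact (abs_apply_le_norm (_ - _) i).trans hA
        · exact abs_one_div_norm_pow_three_sub_le hxy h
    _ ≤ (2 * ‖x - z‖ + 2 * ‖x - z‖ * (3 / 2 * ‖x - y‖)) * ‖x - y‖ / ‖x - y‖ ^ 3
          + 2 * (3 / 2 * ‖x - y‖) * ‖x - z‖ / ‖x - y‖ ^ 3
          + 2 * (3 / 2 * ‖x - y‖) * (3 / 2 * ‖x - y‖) * (48 * ‖x - z‖ / ‖x - y‖ ^ 4) := by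
        gcongr
    _ = _ := by field_simp; ring

/-- Hölder-type difference estimate for the kernel `κ_{i,j}` with a `1`-Lipschitz
unit vector field, under the condition `2|x−z| ≤ |x−y|`. -/
theorem stmt5 (Γ : Set (EuclideanSpace ℝ (Fin 3)))
    (ν : EuclideanSpace ℝ (Fin 3) → EuclideanSpace ℝ (Fin 3))
    (hunit : ∀ x ∈ Γ, ‖ν x‖ = 1)
    (hlip : ∀ x ∈ Γ, ∀ z ∈ Γ, ‖ν x - ν z‖ ≤ ‖x - z‖)
    (i j : Fin 3)
    (x y z : EuclideanSpace ℝ (Fin 3)) (hx : x ∈ Γ) (hy : y ∈ Γ) (hz : z ∈ Γ)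
    (hxy : x ≠ y) (hzy : z ≠ y) (h : 2 * ‖x - z‖ ≤ ‖x - y‖) :
    |kappa ν i j x y - kappa ν i j z y| ≤
      2 * ‖x - z‖ / ‖x - y‖ ^ 2 + 3 * ‖x - z‖ / ‖x - y‖ +
      3 * ‖x - z‖ / ‖x - y‖ ^ 2 + 216 * ‖x - z‖ / ‖x - y‖ ^ 2 :=
  stmt5_general Γ ν hunit hlip i j x y z hx hy hz hxy h
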